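/- arXiv:0709.1768 — 6 statements merged into one kernel-verified Lean document; each statement's English description precedes it below -/
import Mathlib

section
/- Let A: 𝔥 × F_λ → F_μ, (h dx^{-1/2}, f dx^λ) ↦ A(h,f) dx^μ be a bilinear differential operator, where 𝔥 ⊂ F_{-1/2} is spanned by dx^{-1/2} and x dx^{-1/2}. If A is sl(2)-invariant and nonzero, then μ = λ - 1/2 + k for some k ∈ ℕ, and A has the form A(h,f) = a_k(h f^{(k)} + k(2λ+k-1)h'f^{(k-1)}) with the constraint k(k-1)(2λ+k-1)(2λ+k-2)a_k = 0. -/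
noncomputable section

/-- Functions on the supercircle `S^{1|1}`: `F = f₀(x) + θ f₁(x)`, as the pair `(f₀, f₁)`. -/
abbrev SFn : Type := (ℝ → ℝ) × (ℝ → ℝ)

namespace S11

/-- Smoothness of a superfunction. -/
def Smooth (F : SFn) : Prop := ContDiff ℝ (⊤ : ℕ∞) F.1 ∧ ContDiff ℝ (⊤ : ℕ∞) F.2

/-- Product in `C^∞(S^{1|1})` (using `θ² = 0`). -/
def mul (F G : SFn) : SFn := (F.1 * G.1, F.1 * G.2 + F.2 * G.1)

/-- `∂_x`. -/
def dx (F : SFn) : SFn := (deriv F.1, deriv F.2)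

/-- `∂_θ`. -/
def dth (F : SFn) : SFn := (F.2, 0)

/-- `η = ∂_θ + θ∂_x`. -/
def eta (F : SFn) : SFn := (F.2, deriv F.1)

/-- `η̄ = ∂_θ - θ∂_x`. -/
def etab (F : SFn) : SFn := (F.2, -deriv F.1)

/-- the function `θ`. -/
def thetaF : SFn := (0, 1)
/-- the function `1`. -/
def oneF : SFn := (1, 0)
/-- the function `x`. -/
def xF : SFn := (fun x => x, 0)
/-- the function `x²`. -/
def x2F : SFn := (fun x => x ^ 2, 0)
/-- the function `xθ`. -/
def xthF : SFn := (0, fun x => x)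

/-- Homogeneous of parity `p` (`false` = even, `true` = odd). -/
def Homog (p : Bool) (F : SFn) : Prop := if p then F.1 = 0 else F.2 = 0

/-- `(-1)^(p+1)`. -/
def sgn1 (p : Bool) : ℝ := if p then 1 else -1

/-- `(-1)^(p·q)`. -/
def sgn (p q : Bool) : ℝ := if p && q then -1 else 1

/-- The contact bracket `{F,G}` for `F` homogeneous of parity `p`. -/
def cbr (p : Bool) (F G : SFn) : SFn :=
  mul F (dx G) - mul (dx F) G + ((2:ℝ)⁻¹ * sgn1 p) • mul (etab F) (etab G)

/-- `𝔏^λ_{X_F}(G)` for homogeneous `F` (parity `p`) and `G` (parity `q`). -/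
def Lden (l : ℝ) (p : Bool) (F : SFn) (q : Bool) (G : SFn) : SFn :=
  mul F (dx G) + ((2:ℝ)⁻¹ * (if !p && q then (-1:ℝ) else 1)) • mul (etab F) (etab G)
    + l • mul (dx F) G

/-- Vector field `P∂_x + Q∂_θ`, as the pair `(P, Q)`. -/
abbrev SVF : Type := SFn × SFn

/-- Application of a vector field to a superfunction. -/
def applyV (X : SVF) (G : SFn) : SFn := mul X.1 (dx G) + mul X.2 (dth G)

/-- Vector field homogeneous of parity `p`. -/
def HomogV (p : Bool) (X : SVF) : Prop := Homog p X.1 ∧ Homog (!p) X.2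

/-- Smooth vector field. -/
def SmoothV (X : SVF) : Prop := Smooth X.1 ∧ Smooth X.2

/-- Super commutator `[X,Y] = X∘Y - (-1)^{p(X)p(Y)} Y∘X` of homogeneous vector fields. -/
def vbr (p : Bool) (X : SVF) (q : Bool) (Y : SVF) : SVF :=
  (applyV X Y.1 - sgn p q • applyV Y X.1, applyV X Y.2 - sgn p q • applyV Y X.2)

/-- The contact vector field `X_F = F∂_x + ½η(F)(∂_θ - θ∂_x)`. -/
def XV (F : SFn) : SVF := (F - (2:ℝ)⁻¹ • mul thetaF (eta F), (2:ℝ)⁻¹ • eta F)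

/-- Evaluation of the contact form `α = dx + θdθ` on a vector field. -/
def alphaEv (Y : SVF) : SFn := Y.1 + mul thetaF Y.2

/-- Homogeneous even elements of `osp(1|2)`: `a + bx + cx²`. -/
def OspE (F : SFn) : Prop := ∃ a b c : ℝ, F = (fun x => a + b * x + c * x ^ 2, 0)

/-- Homogeneous odd elements of `osp(1|2)`: `(a + bx)θ`. -/
def OspO (F : SFn) : Prop := ∃ a b : ℝ, F = (0, fun x => a + b * x)

/-- Homogeneous elements of `osp(1|2)` of parity `p`. -/
def OspHom (p : Bool) (F : SFn) : Prop := if p then OspO F else OspE F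

/-- Value at a homogeneous density `(q, H)` of `𝔏^{λ,μ}_{X_F}(T)`, where `T` is an
operator of parity `pA` from λ-densities to μ-densities. -/
def LD (l m : ℝ) (p : Bool) (F : SFn) (pA : Bool) (T : SFn → SFn) (q : Bool) (H : SFn) : SFn :=
  Lden m p F (xor pA q) (T H) - sgn pA p • T (Lden l p F q H)

/-- `T` is a differential operator of parity `pA` on `S^{1|1}`:
`T = Σ ã_i ∂_x^i + Σ b̃_i ∂_x^i ∂_θ` with coefficients of the appropriate parity. -/
def IsDOp (pA : Bool) (T : SFn → SFn) : Prop :=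
  ∃ (N : ℕ) (a b : ℕ → ℝ → ℝ), (∀ i, ContDiff ℝ (⊤ : ℕ∞) (a i) ∧ ContDiff ℝ (⊤ : ℕ∞) (b i)) ∧
    ∀ G : SFn, T G = ∑ i ∈ Finset.range (N + 1),
      (mul (if pA then (((0 : ℝ → ℝ), a i) : SFn) else ((a i, (0 : ℝ → ℝ)) : SFn)) (dx^[i] G)
        + mul (if pA then ((b i, (0 : ℝ → ℝ)) : SFn) else (((0 : ℝ → ℝ), b i) : SFn))
            (dx^[i] (dth G)))

/-- Classical Lie derivative `L^λ_{a∂_x} f = a f' + λ a' f` on λ-densities on `S¹`. -/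
def cL (l : ℝ) (a f : ℝ → ℝ) : ℝ → ℝ := a * deriv f + l • (deriv a * f)

/-- Evaluation of a real polynomial as a function. -/
def pev (P : Polynomial ℝ) : ℝ → ℝ := fun x => Polynomial.eval x P

/-- `h` is an affine function. -/
def Affine (h : ℝ → ℝ) : Prop := ∃ a b : ℝ, h = fun x => a + b * x

end S11


namespace Sl2InvAux

open Polynomial

/-- iterated derivative of the zero function -/
lemma iter_zero_fun (j : ℕ) : iteratedDeriv j (fun _ : ℝ => (0:ℝ)) = fun _ => 0 := by
  induction j with
  | zero => simp [iteratedDeriv_zero]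
  | succ j ih =>
    rw [iteratedDeriv_succ',
      show deriv (fun _ : ℝ => (0:ℝ)) = fun _ => 0 from funext fun x => deriv_const x 0]
    exact ih

lemma iter_const_fun (b : ℝ) (j : ℕ) :
    iteratedDeriv (j + 1) (fun _ : ℝ => b) = fun _ => 0 := by
  rw [iteratedDeriv_succ',
    show deriv (fun _ : ℝ => b) = fun _ => (0:ℝ) from funext fun x => deriv_const x b]
  exact iter_zero_fun j

lemma affine_hasDerivAt (A0 B x : ℝ) : HasDerivAt (fun y : ℝ => A0 + B * y) B x := by
  simpa using (hasDerivAt_const x A0).fun_add ((hasDerivAt_id x).const_mul B)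

lemma affine_deriv (A0 B : ℝ) : deriv (fun y : ℝ => A0 + B * y) = fun _ => B :=
  funext fun x => (affine_hasDerivAt A0 B x).deriv

lemma affine_deriv_apply (A0 B x : ℝ) : deriv (fun y : ℝ => A0 + B * y) x = B :=
  (affine_hasDerivAt A0 B x).deriv

lemma iter_affine_ge2 (A0 B : ℝ) {i : ℕ} (h2 : 2 ≤ i) :
    iteratedDeriv i (fun y : ℝ => A0 + B * y) = fun _ => 0 := by
  match i, h2 with
  | (i + 2), _ =>
    rw [iteratedDeriv_succ', affine_deriv]
    exact iter_const_fun B i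

/-- test monomials -/
noncomputable def mn (n : ℕ) (x0 : ℝ) : ℝ → ℝ := fun x => (x - x0) ^ n / n.factorial

lemma mn_contDiff (n : ℕ) (x0 : ℝ) : ContDiff ℝ (⊤ : ℕ∞) (mn n x0) :=
  ((contDiff_id.sub contDiff_const).pow n).div_const _

lemma mn_zero_eq (x0 : ℝ) : mn 0 x0 = fun _ => (1:ℝ) := by
  funext x; simp [mn]

lemma mn_hasDerivAt (n : ℕ) (x0 x : ℝ) : HasDerivAt (mn (n+1) x0) (mn n x0 x) x := by
  have h : HasDerivAt (fun y : ℝ => (y - x0) ^ (n+1))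
      (((n+1 : ℕ) : ℝ) * (x - x0) ^ (n + 1 - 1) * 1) x :=
    ((hasDerivAt_id x).sub_const x0).pow (n+1)
  have h2 := h.div_const (((n+1).factorial : ℕ) : ℝ)
  have hval : mn n x0 x = (((n+1 : ℕ) : ℝ) * (x - x0) ^ (n + 1 - 1) * 1) / (((n+1).factorial : ℕ) : ℝ) := by
    have hnf : ((n.factorial : ℕ) : ℝ) ≠ 0 := Nat.cast_ne_zero.mpr n.factorial_ne_zero
    simp only [mn, Nat.add_sub_cancel, mul_one, Nat.factorial_succ]
    push_cast
    field_simp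
  rw [hval]
  exact h2

lemma mn_deriv (n : ℕ) (x0 : ℝ) : deriv (mn (n+1) x0) = mn n x0 :=
  funext fun x => (mn_hasDerivAt n x0 x).deriv

lemma mn_zero_deriv (x0 : ℝ) : deriv (mn 0 x0) = fun _ => (0:ℝ) := by
  rw [mn_zero_eq]
  exact funext fun x => deriv_const x 1

lemma mn_self (n : ℕ) (x0 : ℝ) : mn n x0 x0 = if n = 0 then 1 else 0 := by
  cases n <;> simp [mn]

lemma mn_iter (j n : ℕ) (x0 : ℝ) :
    iteratedDeriv j (mn n x0) = if j ≤ n then mn (n - j) x0 else fun _ => 0 := by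
  induction j generalizing n with
  | zero => simp [iteratedDeriv_zero]
  | succ j ih =>
    rw [iteratedDeriv_succ']
    cases n with
    | zero =>
      rw [mn_zero_deriv, iter_zero_fun j]
      simp
    | succ k =>
      rw [mn_deriv k x0, ih k]
      simp [Nat.succ_sub_succ, Nat.add_le_add_iff_right]

lemma mn_iter_self (j n : ℕ) (x0 : ℝ) :
    iteratedDeriv j (mn n x0) x0 = if j = n then 1 else 0 := by
  rw [mn_iter]
  by_cases hj : j ≤ n
  · rw [if_pos hj, mn_self]
    by_cases h2 : j = n
    · simp [h2]
    · simp [h2, show ¬ (n - j = 0) by omega]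
  · rw [if_neg hj]
    simp [show ¬ (j = n) by omega]

/-- pointwise cL computations -/
lemma pev_one_eq : S11.pev (1 : Polynomial ℝ) = fun _ => (1:ℝ) := funext fun x => by
  simp [S11.pev]

lemma pev_X_eq : S11.pev (X : Polynomial ℝ) = fun x => x := funext fun x => by
  simp [S11.pev]

lemma pev_X2_eq : S11.pev ((X : Polynomial ℝ)^2) = fun x => x^2 := funext fun x => by
  simp [S11.pev]

lemma cL_one_apply (r : ℝ) (g : ℝ → ℝ) (x : ℝ) : S11.cL r (S11.pev 1) g x = deriv g x := by
  simp only [S11.cL, pev_one_eq, Pi.add_apply, Pi.mul_apply, Pi.smul_apply, smul_eq_mul]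
  rw [show deriv (fun _ : ℝ => (1:ℝ)) = fun _ => (0:ℝ) from funext fun y => deriv_const y 1]
  simp

lemma cL_X_apply (r : ℝ) (g : ℝ → ℝ) (x : ℝ) :
    S11.cL r (S11.pev X) g x = x * deriv g x + r * g x := by
  simp only [S11.cL, pev_X_eq, Pi.add_apply, Pi.mul_apply, Pi.smul_apply, smul_eq_mul]
  rw [show deriv (fun y : ℝ => y) = fun _ => (1:ℝ) from funext fun y => deriv_id y]
  simp

lemma cL_X2_apply (r : ℝ) (g : ℝ → ℝ) (x : ℝ) :
    S11.cL r (S11.pev (X^2)) g x = x^2 * deriv g x + r * ((2*x) * g x) := by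
  simp only [S11.cL, pev_X2_eq, Pi.add_apply, Pi.mul_apply, Pi.smul_apply, smul_eq_mul]
  rw [show deriv (fun y : ℝ => y^2) = fun y => 2*y from funext fun y => by
    simpa using deriv_pow 2 (x := y)]

lemma cLX_mn (r : ℝ) (n : ℕ) :
    S11.cL r (S11.pev X) (mn n 0) = ((n:ℝ) + r) • mn n 0 := by
  funext y
  rw [cL_X_apply]
  cases n with
  | zero =>
    rw [mn_zero_deriv]
    simp [mn_zero_eq]
  | succ k =>
    rw [mn_deriv]
    have hkf : ((k.factorial : ℕ) : ℝ) ≠ 0 := Nat.cast_ne_zero.mpr k.factorial_ne_zero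
    simp only [mn, Pi.smul_apply, smul_eq_mul, sub_zero, Nat.factorial_succ]
    push_cast
    field_simp
    ring

lemma cLX2_mn (r : ℝ) (n : ℕ) :
    S11.cL r (S11.pev (X^2)) (mn n 0) = (((n:ℝ)+1) * ((n:ℝ) + 2*r)) • mn (n+1) 0 := by
  funext y
  rw [cL_X2_apply]
  cases n with
  | zero =>
    rw [mn_zero_deriv]
    simp only [mn, Pi.smul_apply, smul_eq_mul, sub_zero]
    norm_num
    ring
  | succ k =>
    rw [mn_deriv]
    have hkf : ((k.factorial : ℕ) : ℝ) ≠ 0 := Nat.cast_ne_zero.mpr k.factorial_ne_zero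
    simp only [mn, Pi.smul_apply, smul_eq_mul, sub_zero, Nat.factorial_succ]
    push_cast
    field_simp
    ring

lemma sum_collapse_M (M : ℕ) (t : ℕ → ℝ) (ht : ∀ i, 2 ≤ i → t i = 0) :
    ∑ i ∈ Finset.range (M+1), t i = t 0 + (if 1 ≤ M then t 1 else 0) := by
  rcases Nat.eq_zero_or_pos M with hM | hM
  · subst hM; simp
  · rw [if_pos (show 1 ≤ M by omega)]
    have hsub : ({0,1} : Finset ℕ) ⊆ Finset.range (M+1) := by
      intro i hi
      simp only [Finset.mem_insert, Finset.mem_singleton] at hi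
      simp only [Finset.mem_range]
      omega
    rw [← Finset.sum_subset hsub (by
      intro i hi hni
      simp only [Finset.mem_insert, Finset.mem_singleton] at hni
      push_neg at hni
      exact ht i (by omega))]
    rw [Finset.sum_pair (by norm_num)]

end Sl2InvAux

open Sl2InvAux Polynomial

open S11 in
/-- classification of `sl(2)`-invariant bilinear differential operators
`A : 𝔥 × F_λ → F_μ`. -/
theorem sl2_invariant_bilinear_operators (l m : ℝ)
    (A : (ℝ → ℝ) → (ℝ → ℝ) → (ℝ → ℝ))
    (hrep : ∃ (M N : ℕ) (c : ℕ → ℕ → ℝ → ℝ), (∀ i j, ContDiff ℝ (⊤ : ℕ∞) (c i j)) ∧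
      ∀ h f : ℝ → ℝ, A h f = ∑ i ∈ Finset.range (M + 1), ∑ j ∈ Finset.range (N + 1),
        c i j * iteratedDeriv i h * iteratedDeriv j f)
    (hinv : ∀ P : Polynomial ℝ, P.natDegree ≤ 2 → ∀ h f : ℝ → ℝ, Affine h →
      ContDiff ℝ (⊤ : ℕ∞) f →
      cL m (pev P) (A h f)
        = A (cL (-(2:ℝ)⁻¹) (pev P) h) f + A h (cL l (pev P) f))
    (hnz : ∃ h f : ℝ → ℝ, Affine h ∧ ContDiff ℝ (⊤ : ℕ∞) f ∧ A h f ≠ 0) :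
    ∃ (k : ℕ) (ak : ℝ), m = l - (2:ℝ)⁻¹ + k
      ∧ (k : ℝ) * ((k:ℝ) - 1) * (2*l + k - 1) * (2*l + k - 2) * ak = 0
      ∧ ∀ h f : ℝ → ℝ, Affine h → ContDiff ℝ (⊤ : ℕ∞) f →
          A h f = ak • (h * iteratedDeriv k f
            + ((k:ℝ) * (2*l + k - 1)) • (deriv h * iteratedDeriv (k - 1) f)) := by
  classical
  obtain ⟨M, N, c, hcs, hA⟩ := hrep
  set c1 : ℕ → ℝ → ℝ := if 1 ≤ M then c 1 else fun _ _ => 0 with hc1def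
  have hsc1 : ∀ j, ContDiff ℝ (⊤ : ℕ∞) (c1 j) := by
    intro j
    rw [hc1def]
    split_ifs
    · exact hcs 1 j
    · exact contDiff_const
  -- the reduced representation on affine first arguments
  have hR : ∀ (A0 B : ℝ) (f : ℝ → ℝ), A (fun x => A0 + B * x) f
      = fun x => ∑ j ∈ Finset.range (N + 1),
          (c 0 j x * (A0 + B * x) + c1 j x * B) * iteratedDeriv j f x := by
    intro A0 B f
    rw [hA]
    funext x
    simp only [Finset.sum_apply, Pi.mul_apply]
    have hvanish : ∀ i, 2 ≤ i →
        (∑ j ∈ Finset.range (N + 1),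
          c i j x * iteratedDeriv i (fun x => A0 + B * x) x * iteratedDeriv j f x) = 0 := by
      intro i hi
      apply Finset.sum_eq_zero
      intro j _
      rw [iter_affine_ge2 A0 B hi]
      simp
    rw [sum_collapse_M M _ hvanish]
    simp only [iteratedDeriv_zero, iteratedDeriv_one, affine_deriv_apply]
    by_cases hM : 1 ≤ M
    · rw [if_pos hM]
      have hc1 : ∀ j, c1 j = c 1 j := by intro j; rw [hc1def, if_pos hM]
      rw [← Finset.sum_add_distrib]
      apply Finset.sum_congr rfl
      intro j _
      rw [hc1 j]
      ring
    · rw [if_neg hM]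
      have hc1 : ∀ j, c1 j = fun _ => (0:ℝ) := by intro j; rw [hc1def, if_neg hM]
      rw [add_zero]
      apply Finset.sum_congr rfl
      intro j _
      rw [hc1 j]
      simp
  -- evaluation at the center of test monomials
  have hE : ∀ (A0 B : ℝ) (n : ℕ) (x0 : ℝ), A (fun x => A0 + B * x) (mn n x0) x0
      = if n ≤ N then c 0 n x0 * (A0 + B * x0) + c1 n x0 * B else 0 := by
    intro A0 B n x0
    rw [hR A0 B (mn n x0)]
    simp only []
    rw [Finset.sum_congr rfl (fun j _ => by
      rw [mn_iter_self, mul_ite, mul_one, mul_zero])]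
    rw [Finset.sum_ite_eq' (Finset.range (N + 1)) n]
    simp [Finset.mem_range, Nat.lt_succ_iff]
  have hzero : ∀ (A0 B x : ℝ), A (fun y => A0 + B * y) (fun _ => (0:ℝ)) x = 0 := by
    intro A0 B x
    rw [hR A0 B (fun _ => (0:ℝ))]
    simp only []
    apply Finset.sum_eq_zero
    intro j _
    rw [iter_zero_fun]
    simp
  have hsmul : ∀ (A0 B s : ℝ) (f : ℝ → ℝ), ContDiff ℝ (⊤ : ℕ∞) f → ∀ x,
      A (fun y => A0 + B * y) (s • f) x = s * A (fun y => A0 + B * y) f x := by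
    intro A0 B s f hf x
    rw [hR A0 B (s • f), hR A0 B f]
    simp only []
    rw [Finset.mul_sum]
    refine Finset.sum_congr rfl fun j _ => ?_
    have hs : iteratedDeriv j (s • f) x = s * iteratedDeriv j f x := by
      rw [← iteratedDerivWithin_univ, ← iteratedDerivWithin_univ,
        iteratedDerivWithin_const_smul (Set.mem_univ x) uniqueDiffOn_univ s
          (hf.of_le (by exact_mod_cast le_top)).contDiffWithinAt]
      simp
    rw [hs]
    ring
  -- the coefficients are constant
  have hconst : ∀ n, n ≤ N → ∀ x0 : ℝ, deriv (c 0 n) x0 = 0 ∧ deriv (c1 n) x0 = 0 := by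
    intro n hn x0
    have key : ∀ A0 B : ℝ,
        deriv (c 0 n) x0 * (A0 + B * x0) + deriv (c1 n) x0 * B = 0 := by
      intro A0 B
      have hD : ∀ j : ℕ,
          HasDerivAt (iteratedDeriv j (mn n x0)) (if j + 1 = n then 1 else 0) x0 := by
        intro j
        rw [mn_iter]
        by_cases hj : j ≤ n
        · rw [if_pos hj]
          rcases Nat.lt_or_ge j n with hjn | hjn
          · obtain ⟨kk, hkk⟩ : ∃ kk, n - j = kk + 1 := ⟨n - j - 1, by omega⟩
            rw [hkk]
            have hh := mn_hasDerivAt kk x0 x0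
            rw [mn_self] at hh
            rw [show (if j + 1 = n then (1:ℝ) else 0) = (if kk = 0 then 1 else 0) from by
              by_cases h' : j + 1 = n
              · rw [if_pos h', if_pos (by omega)]
              · rw [if_neg h', if_neg (by omega)]]
            exact hh
          · rw [show n - j = 0 by omega, mn_zero_eq, if_neg (by omega : ¬ j + 1 = n)]
            exact hasDerivAt_const x0 1
        · rw [if_neg hj, if_neg (by omega : ¬ j + 1 = n)]
          exact hasDerivAt_const x0 0
      have hG : HasDerivAt
          (fun x => ∑ j ∈ Finset.range (N + 1),
            (c 0 j x * (A0 + B * x) + c1 j x * B) * iteratedDeriv j (mn n x0) x)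
          (∑ j ∈ Finset.range (N + 1),
            ((deriv (c 0 j) x0 * (A0 + B * x0) + c 0 j x0 * B + deriv (c1 j) x0 * B)
                * (if j = n then 1 else 0)
              + (c 0 j x0 * (A0 + B * x0) + c1 j x0 * B)
                * (if j + 1 = n then 1 else 0))) x0 := by
        apply HasDerivAt.fun_sum
        intro j _
        have h0 : HasDerivAt (c 0 j) (deriv (c 0 j) x0) x0 :=
          (((hcs 0 j).differentiable (by simp)) x0).hasDerivAt
        have h1 : HasDerivAt (c1 j) (deriv (c1 j) x0) x0 :=
          (((hsc1 j).differentiable (by simp)) x0).hasDerivAt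
        have hgj : HasDerivAt (fun x => c 0 j x * (A0 + B * x) + c1 j x * B)
            (deriv (c 0 j) x0 * (A0 + B * x0) + c 0 j x0 * B + deriv (c1 j) x0 * B) x0 := by
          have hh := (h0.mul (affine_hasDerivAt A0 B x0)).add (h1.mul_const B)
          exact hh
        have hh := hgj.mul (hD j)
        refine hh.congr_deriv ?_
        rw [mn_iter_self]
      have h1 := hinv 1 (by simp) (fun x => A0 + B * x) (mn n x0) ⟨A0, B, rfl⟩
        (mn_contDiff n x0)
      have h1x := congrFun h1 x0
      rw [Pi.add_apply, cL_one_apply] at h1x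
      rw [show cL (-(2:ℝ)⁻¹) (pev 1) (fun x => A0 + B * x) = fun x => B + 0 * x from
        funext fun y => by rw [cL_one_apply, affine_deriv_apply]; ring] at h1x
      rw [hR A0 B (mn n x0)] at h1x
      rw [hG.deriv] at h1x
      rw [hE B 0 n x0] at h1x
      rw [Finset.sum_add_distrib] at h1x
      simp only [mul_ite, mul_one, mul_zero] at h1x
      rw [Finset.sum_ite_eq' (Finset.range (N + 1)) n] at h1x
      cases n with
      | zero =>
        rw [show cL l (pev 1) (mn 0 x0) = fun _ => (0:ℝ) from
          funext fun y => by rw [cL_one_apply, mn_zero_deriv]] at h1x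
        rw [hzero A0 B x0] at h1x
        simp only [Nat.add_one_ne_zero, if_false, Finset.sum_const_zero,
          Finset.mem_range] at h1x
        rw [if_pos (show 0 < N + 1 by omega), if_pos (show 0 ≤ N from hn)] at h1x
        linear_combination h1x
      | succ n' =>
        rw [show cL l (pev 1) (mn (n' + 1) x0) = mn n' x0 from
          funext fun y => by rw [cL_one_apply, mn_deriv]] at h1x
        rw [hE A0 B n' x0] at h1x
        simp only [add_left_inj] at h1x
        rw [Finset.sum_ite_eq' (Finset.range (N + 1)) n'] at h1x
        simp only [Finset.mem_range] at h1x
        rw [if_pos (show n' + 1 < N + 1 by omega), if_pos (show n' < N + 1 by omega),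
          if_pos (show n' + 1 ≤ N from hn), if_pos (show n' ≤ N by omega)] at h1x
        linear_combination h1x
    constructor
    · linear_combination key 1 0
    · linear_combination key (-x0) 1
  have hc0c : ∀ n, n ≤ N → ∀ x : ℝ, c 0 n x = c 0 n 0 := fun n hn x =>
    is_const_of_deriv_eq_zero ((hcs 0 n).differentiable (by simp))
      (fun y => (hconst n hn y).1) x 0
  have hc1c : ∀ n, n ≤ N → ∀ x : ℝ, c1 n x = c1 n 0 := fun n hn x =>
    is_const_of_deriv_eq_zero ((hsc1 n).differentiable (by simp))
      (fun y => (hconst n hn y).2) x 0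
  set α : ℕ → ℝ := fun n => if n ≤ N then c 0 n 0 else 0 with hαd
  set β : ℕ → ℝ := fun n => if n ≤ N then c1 n 0 else 0 with hβd
  have hE' : ∀ (A0 B : ℝ) (n : ℕ) (x0 : ℝ), A (fun y => A0 + B * y) (mn n x0) x0
      = α n * (A0 + B * x0) + β n * B := by
    intro A0 B n x0
    rw [hE A0 B n x0]
    by_cases hn : n ≤ N
    · rw [if_pos hn, hc0c n hn x0, hc1c n hn x0]
      simp only [hαd, hβd]
      rw [if_pos hn, if_pos hn]
    · rw [if_neg hn]
      simp only [hαd, hβd]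
      rw [if_neg hn, if_neg hn]
      ring
  have hFormula : ∀ (A0 B : ℝ) (f : ℝ → ℝ) (x : ℝ), A (fun y => A0 + B * y) f x
      = ∑ j ∈ Finset.range (N + 1), (α j * (A0 + B * x) + β j * B) * iteratedDeriv j f x := by
    intro A0 B f x
    rw [hR A0 B f]
    simp only []
    apply Finset.sum_congr rfl
    intro j hj
    have hjN : j ≤ N := by
      have := Finset.mem_range.mp hj; omega
    rw [hc0c j hjN x, hc1c j hjN x]
    simp only [hαd, hβd]
    rw [if_pos hjN, if_pos hjN]
  -- the equation coming from X
  have EqX : ∀ (n : ℕ) (A0 B : ℝ), m * (α n * A0 + β n * B)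
      = α n * (-(A0 / 2)) + β n * (B / 2) + ((n:ℝ) + l) * (α n * A0 + β n * B) := by
    intro n A0 B
    have h2 := hinv X (by norm_num [Polynomial.natDegree_X]) (fun x => A0 + B * x) (mn n 0)
      ⟨A0, B, rfl⟩ (mn_contDiff n 0)
    rw [show cL (-(2:ℝ)⁻¹) (pev X) (fun x => A0 + B * x) = fun x => -(A0 / 2) + B / 2 * x from
      funext fun y => by rw [cL_X_apply, affine_deriv_apply]; ring] at h2
    rw [cLX_mn l n] at h2
    have h2x := congrFun h2 0
    rw [Pi.add_apply, cL_X_apply] at h2x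
    rw [hsmul A0 B ((n:ℝ) + l) (mn n 0) (mn_contDiff n 0) 0] at h2x
    rw [hE' A0 B n 0, hE' (-(A0 / 2)) (B / 2) n 0] at h2x
    linear_combination h2x
  have E1 : ∀ n : ℕ, (m - ((n:ℝ) + l - (2:ℝ)⁻¹)) * α n = 0 := fun n => by
    linear_combination EqX n 1 0
  have E2 : ∀ n : ℕ, (m - ((n:ℝ) + l + (2:ℝ)⁻¹)) * β n = 0 := fun n => by
    linear_combination EqX n 0 1
  -- the equation coming from X^2
  have EqX2 : ∀ (n : ℕ) (A0 B : ℝ),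
      0 = β n * (-A0) + (((n:ℝ) + 1) * ((n:ℝ) + 2 * l)) * (α (n + 1) * A0 + β (n + 1) * B) := by
    intro n A0 B
    have h3 := hinv (X ^ 2) (by norm_num [Polynomial.natDegree_X_pow]) (fun x => A0 + B * x)
      (mn n 0) ⟨A0, B, rfl⟩ (mn_contDiff n 0)
    rw [show cL (-(2:ℝ)⁻¹) (pev (X ^ 2)) (fun x => A0 + B * x) = fun x => 0 + -A0 * x from
      funext fun y => by rw [cL_X2_apply, affine_deriv_apply]; ring] at h3
    rw [cLX2_mn l n] at h3
    have h3x := congrFun h3 0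
    rw [Pi.add_apply, cL_X2_apply] at h3x
    rw [hsmul A0 B (((n:ℝ) + 1) * ((n:ℝ) + 2 * l)) (mn (n + 1) 0)
      (mn_contDiff (n + 1) 0) 0] at h3x
    rw [hE' A0 B (n + 1) 0, hE' 0 (-A0) n 0] at h3x
    linear_combination h3x
  have E3 : ∀ n : ℕ, β n = (((n:ℝ) + 1) * ((n:ℝ) + 2 * l)) * α (n + 1) := fun n => by
    linear_combination EqX2 n 1 0
  have E4 : ∀ n : ℕ, (((n:ℝ) + 1) * ((n:ℝ) + 2 * l)) * β (n + 1) = 0 := fun n => by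
    linear_combination - EqX2 n 0 1
  -- extract k
  obtain ⟨h0, f0, hh0, hf0, hne0⟩ := hnz
  obtain ⟨A0z, Bz, rfl⟩ := hh0
  have hex : ∃ kk : ℕ, α kk ≠ 0 := by
    by_contra hall
    push_neg at hall
    apply hne0
    funext x
    rw [hFormula A0z Bz f0 x]
    rw [Finset.sum_eq_zero (fun j _ => by rw [hall j, E3 j, hall (j + 1)]; ring)]
    simp
  obtain ⟨k, hk⟩ := hex
  have hkN : k ≤ N := by
    by_contra hgt
    apply hk
    simp only [hαd]
    rw [if_neg (by omega)]
  have hm : m = (k:ℝ) + l - (2:ℝ)⁻¹ := by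
    rcases mul_eq_zero.mp (E1 k) with h'' | h''
    · linarith
    · exact absurd h'' hk
  have hαj : ∀ j, j ≠ k → α j = 0 := by
    intro j hj
    rcases mul_eq_zero.mp (E1 j) with h'' | h''
    · exfalso
      apply hj
      have hjk : (j:ℝ) = (k:ℝ) := by linarith
      exact_mod_cast hjk
    · exact h''
  have hβj : ∀ j, j + 1 ≠ k → β j = 0 := by
    intro j hj
    rw [E3 j, hαj (j + 1) hj, mul_zero]
  refine ⟨k, α k, by rw [hm]; ring, ?_, ?_⟩
  · -- constraint
    cases k with
    | zero => norm_num
    | succ k1 =>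
      cases k1 with
      | zero => norm_num
      | succ k' =>
        have h4 := E4 k'
        rw [E3 (k' + 1)] at h4
        push_cast at h4 ⊢
        linear_combination h4
  · -- the formula
    intro h f hh _
    obtain ⟨A0, B, rfl⟩ := hh
    funext x
    rw [hFormula A0 B f x]
    simp only [Pi.smul_apply, Pi.add_apply, Pi.mul_apply, smul_eq_mul, affine_deriv_apply]
    cases k with
    | zero =>
      rw [Finset.sum_eq_single_of_mem 0 (by simp) (fun j _ hj => by
        rw [hαj j hj, hβj j (by omega)]; ring)]
      rw [hβj 0 (by omega)]
      simp only [Nat.zero_sub, iteratedDeriv_zero, Nat.cast_zero]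
      ring
    | succ k' =>
      have hsub : ({k', k' + 1} : Finset ℕ) ⊆ Finset.range (N + 1) := by
        intro j hj
        simp only [Finset.mem_insert, Finset.mem_singleton] at hj
        simp only [Finset.mem_range]
        omega
      rw [← Finset.sum_subset hsub (by
        intro j _ hj'
        simp only [Finset.mem_insert, Finset.mem_singleton] at hj'
        push_neg at hj'
        rw [hαj j (by omega), hβj j (by omega)]
        ring)]
      rw [Finset.sum_pair (by omega : k' ≠ k' + 1)]
      rw [hαj k' (by omega), hβj (k' + 1) (by omega), E3 k']
      simp only [Nat.add_sub_cancel]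
      push_cast
      ring
end
end

section
/- For each integer k ≥ 1, the map Υ_{(1-k)/2, k/2}: osp(1|2) → 𝔇_{(1-k)/2, k/2} defined by Υ(X_F) = η̄²(F)·η̄^{2k-1} is an odd 1-cocycle: for all homogeneous X_F, X_G ∈ osp(1|2), Υ([X_F, X_G]) = 𝔏^{λ,μ}_{X_F}(Υ(X_G)) - (-1)^{p(F)p(G)}𝔏^{λ,μ}_{X_G}(Υ(X_F)), with λ = (1-k)/2, μ = k/2. -/
noncomputable section

namespace S11Aux

/-- smooth (C^∞) -/
abbrev Sm (u : ℝ → ℝ) : Prop := ContDiff ℝ (⊤ : ℕ∞) u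

lemma Sm.dv {u : ℝ → ℝ} (hu : Sm u) : Sm (deriv u) :=
  (contDiff_infty_iff_deriv.mp hu).2

lemma Sm.diff {u : ℝ → ℝ} (hu : Sm u) : Differentiable ℝ u :=
  hu.differentiable (by simp)

lemma Sm.iter {u : ℝ → ℝ} (hu : Sm u) (n : ℕ) : Sm (deriv^[n] u) :=
  ContDiff.iterate_deriv n hu

lemma deriv_add_fn {u v : ℝ → ℝ} (hu : Sm u) (hv : Sm v) :
    deriv (fun x => u x + v x) = fun x => deriv u x + deriv v x := by
  funext x; exact deriv_add (hu.diff x) (hv.diff x)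

lemma iter_add {u v : ℝ → ℝ} (hu : Sm u) (hv : Sm v) (n : ℕ) :
    deriv^[n] (fun x => u x + v x) = fun x => deriv^[n] u x + deriv^[n] v x := by
  induction n generalizing u v with
  | zero => rfl
  | succ n ih =>
    simp only [Function.iterate_succ_apply]
    rw [deriv_add_fn hu hv, ih hu.dv hv.dv]

lemma iter_cmul (c : ℝ) (u : ℝ → ℝ) (n : ℕ) :
    deriv^[n] (fun x => c * u x) = fun x => c * deriv^[n] u x := by
  induction n generalizing u with
  | zero => rfl
  | succ n ih =>
    simp only [Function.iterate_succ_apply]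
    rw [deriv_const_mul_field', ih (deriv u)]

lemma dpoly (a b c : ℝ) : deriv (fun x : ℝ => a + b * x + c * x ^ 2) = fun x => b + 2 * c * x := by
  funext x
  have h1 : deriv (fun x : ℝ => b * x) x = b := by
    simpa using ((hasDerivAt_id x).const_mul b).deriv
  have h2 : deriv (fun x : ℝ => c * x ^ 2) x = c * (2 * x) := by
    simpa using (((hasDerivAt_id x).pow 2).const_mul c).deriv
  rw [deriv_fun_add (by fun_prop) (by fun_prop), deriv_fun_add (by fun_prop) (by fun_prop), h1, h2]
  simp; ring

lemma dpoly1 (b c : ℝ) : deriv (fun x : ℝ => b + 2 * c * x) = fun _ => 2 * c := by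
  funext x
  have h1 : deriv (fun x : ℝ => 2 * c * x) x = 2 * c := by
    simpa using ((hasDerivAt_id x).const_mul (2*c)).deriv
  rw [deriv_fun_add (by fun_prop) (by fun_prop), h1]
  simp


lemma leib (a b c : ℝ) {u : ℝ → ℝ} (hu : Sm u) (n : ℕ) :
    deriv^[n] (fun x => (a + b * x + c * x ^ 2) * u x)
      = fun x => (a + b * x + c * x ^ 2) * deriv^[n] u x
          + (n : ℝ) * (b + 2 * c * x) * deriv^[n - 1] u x
          + (n : ℝ) * ((n : ℝ) - 1) * c * deriv^[n - 2] u x := by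
  have hP : Sm (fun x : ℝ => a + b * x + c * x ^ 2) :=
    (contDiff_const.add (contDiff_const.mul contDiff_id)).add
      (contDiff_const.mul (contDiff_id.pow 2))
  have hP1 : Sm (fun x : ℝ => b + 2 * c * x) :=
    contDiff_const.add (contDiff_const.mul contDiff_id)
  induction n with
  | zero => funext x; simp
  | succ n ih =>
    rw [Function.iterate_succ_apply', ih]
    funext x
    have dD : ∀ j : ℕ, deriv (deriv^[j] u) = deriv^[j + 1] u :=
      fun j => (Function.iterate_succ_apply' deriv j u).symm
    have hDn : ∀ (j : ℕ) (x : ℝ), HasDerivAt (deriv^[j] u) (deriv^[j + 1] u x) x := by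
      intro j x; rw [← dD j]; exact ((hu.iter j).diff x).hasDerivAt
    have hPd : HasDerivAt (fun x : ℝ => a + b * x + c * x ^ 2) (b + 2 * c * x) x := by
      have := (hP.diff x).hasDerivAt
      rwa [congrFun (dpoly a b c) x] at this
    have hP1d : HasDerivAt (fun x : ℝ => b + 2 * c * x) (2 * c) x := by
      have := (hP1.diff x).hasDerivAt
      rwa [congrFun (dpoly1 b c) x] at this
    have big := ((hPd.mul (hDn n x)).add
        (((hP1d.const_mul ((n : ℝ))).mul (hDn (n - 1) x)))).add
        ((hDn (n - 2) x).const_mul ((n : ℝ) * ((n : ℝ) - 1) * c))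
    refine Eq.trans big.deriv ?_
    rcases n with _ | n
    · norm_num; ring
    · rcases n with _ | n
      · norm_num; ring
      · have e1 : n + 1 + 1 - 1 = n + 1 := by omega
        have e2 : n + 1 + 1 - 2 = n := by omega
        have e3 : n + 1 + 1 + 1 - 1 = n + 1 + 1 := by omega
        have e4 : n + 1 + 1 + 1 - 2 = n + 1 := by omega
        rw [e1, e2, e3, e4]
        push_cast
        ring

end S11Aux

namespace S11Aux
open S11

lemma etab_iter (m : ℕ) (K : SFn) :
    etab^[2 * m + 1] K
      = (fun x => (-1 : ℝ) ^ m * deriv^[m] K.2 x,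
         fun x => (-1 : ℝ) ^ (m + 1) * deriv^[m + 1] K.1 x) := by
  induction m with
  | zero =>
    show etab K = _
    unfold etab
    refine Prod.ext ?_ ?_ <;> funext x <;> simp
  | succ m ih =>
    have h2 : 2 * (m + 1) + 1 = 2 + (2 * m + 1) := by ring
    rw [h2, Function.iterate_add_apply, ih]
    show etab (etab _) = _
    unfold etab
    have dD : ∀ (u : ℝ → ℝ) (j : ℕ), deriv (deriv^[j] u) = deriv^[j + 1] u :=
      fun u j => (Function.iterate_succ_apply' deriv j u).symm
    have e32 : 2 + m = m + 1 + 1 := by omega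
    refine Prod.ext ?_ ?_ <;> funext x <;>
      simp only [Pi.neg_apply, deriv_const_mul_field, dD, e32, pow_succ] <;> ring

end S11Aux

namespace S11Aux

lemma Sm.addP {u v : ℝ → ℝ} (hu : Sm u) (hv : Sm v) : Sm (u + v) := hu.add hv
lemma Sm.mulP {u v : ℝ → ℝ} (hu : Sm u) (hv : Sm v) : Sm (u * v) := hu.mul hv
lemma Sm.smulP (c : ℝ) {u : ℝ → ℝ} (hu : Sm u) : Sm (c • u) := hu.const_smul c
lemma Sm.negP {u : ℝ → ℝ} (hu : Sm u) : Sm (-u) := hu.neg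
lemma Sm.zeroP : Sm (0 : ℝ → ℝ) := contDiff_const
lemma Sm.lam_cmul (c : ℝ) {u : ℝ → ℝ} (hu : Sm u) : Sm (fun x => c * u x) :=
  ContDiff.mul contDiff_const hu
lemma Sm.poly2 (a b c : ℝ) : Sm (fun x : ℝ => a + b * x + c * x ^ 2) :=
  (contDiff_const.add (contDiff_const.mul contDiff_id)).add
    (contDiff_const.mul (contDiff_id.pow 2))
lemma Sm.constP (c : ℝ) : Sm (fun _ : ℝ => c) := contDiff_const
lemma Sm.idP : Sm (fun x : ℝ => x) := contDiff_id
lemma Sm.powP (n : ℕ) : Sm (fun x : ℝ => x ^ n) := contDiff_id.pow n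
lemma Sm.poly1 (p q : ℝ) : Sm (fun x : ℝ => p + q * x) :=
  contDiff_const.add (contDiff_const.mul contDiff_id)

lemma dD (u : ℝ → ℝ) (j : ℕ) : deriv (deriv^[j] u) = deriv^[j + 1] u :=
  (Function.iterate_succ_apply' deriv j u).symm

lemma dD2 (u : ℝ → ℝ) (j : ℕ) : deriv^[j] (deriv u) = deriv^[j + 1] u :=
  (Function.iterate_succ_apply deriv j u).symm

lemma deriv_zeroP : deriv (0 : ℝ → ℝ) = 0 := by
  funext x; exact deriv_const x 0

lemma iter_zeroP (n : ℕ) : deriv^[n] (0 : ℝ → ℝ) = 0 := by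
  induction n with
  | zero => rfl
  | succ n ih => rw [Function.iterate_succ_apply, deriv_zeroP, ih]

lemma deriv_negP (u : ℝ → ℝ) : deriv (-u) = -deriv u := by
  funext x; exact deriv.neg

lemma deriv_smulP (c : ℝ) (u : ℝ → ℝ) : deriv (c • u) = c • deriv u := by
  funext x
  have : (c • u) = fun x => c * u x := by funext y; simp [mul_comm]
  rw [this, deriv_const_mul_field]; simp [mul_comm]

lemma deriv_addP {u v : ℝ → ℝ} (hu : Sm u) (hv : Sm v) :
    deriv (u + v) = deriv u + deriv v := by
  funext x
  simp only [Pi.add_apply, Pi.add_def]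
  exact deriv_add (hu.diff x) (hv.diff x)

lemma deriv_mulP {u v : ℝ → ℝ} (hu : Sm u) (hv : Sm v) :
    deriv (u * v) = deriv u * v + u * deriv v := by
  funext x
  simp only [Pi.mul_apply, Pi.add_apply, Pi.mul_def]
  exact deriv_mul (hu.diff x) (hv.diff x)

lemma iter_addP {u v : ℝ → ℝ} (hu : Sm u) (hv : Sm v) (n : ℕ) :
    deriv^[n] (u + v) = deriv^[n] u + deriv^[n] v := by
  have h : (u + v) = fun x => u x + v x := rfl
  rw [h, iter_add hu hv]; rfl

lemma iter_smulP (c : ℝ) (u : ℝ → ℝ) (n : ℕ) :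
    deriv^[n] (c • u) = c • deriv^[n] u := by
  have h : (c • u) = fun x => c * u x := by funext y; simp [mul_comm]
  rw [h, iter_cmul]; funext y; simp [mul_comm]

lemma iter_negP (u : ℝ → ℝ) (n : ℕ) : deriv^[n] (-u) = -deriv^[n] u := by
  have h : (-u) = fun x => (-1 : ℝ) * u x := by funext y; simp
  rw [h, iter_cmul]; funext y; simp

lemma dlin (p q : ℝ) : deriv (fun x : ℝ => p + q * x) = fun _ => q := by
  funext x
  have h1 : deriv (fun x : ℝ => q * x) x = q := by
    simpa using ((hasDerivAt_id x).const_mul q).deriv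
  rw [deriv_const_add' (f := fun x : ℝ => q * x) p] at *
  exact h1

lemma lamzero : (fun _ : ℝ => (0 : ℝ)) = 0 := rfl

lemma constmulP (q : ℝ) (u : ℝ → ℝ) : (fun _ : ℝ => q) * u = q • u := by
  funext x; simp

lemma leibP (a b c : ℝ) {u : ℝ → ℝ} (hu : Sm u) (n : ℕ) :
    deriv^[n] ((fun x : ℝ => a + b * x + c * x ^ 2) * u)
      = (fun x : ℝ => a + b * x + c * x ^ 2) * deriv^[n] u
        + (n : ℝ) • ((fun x : ℝ => b + 2 * c * x) * deriv^[n - 1] u)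
        + ((n : ℝ) * ((n : ℝ) - 1) * c) • deriv^[n - 2] u := by
  have h : ((fun x : ℝ => a + b * x + c * x ^ 2) * u)
      = fun x => (a + b * x + c * x ^ 2) * u x := rfl
  rw [h, leib a b c hu n]
  funext x; simp only [Pi.add_apply, Pi.mul_apply, Pi.smul_apply, smul_eq_mul]; ring

lemma leibP1 (p q : ℝ) {u : ℝ → ℝ} (hu : Sm u) (n : ℕ) :
    deriv^[n] ((fun x : ℝ => p + q * x) * u)
      = (fun x : ℝ => p + q * x) * deriv^[n] u
        + ((n : ℝ) * q) • deriv^[n - 1] u := by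
  have h2 : (fun x : ℝ => p + q * x) = fun x : ℝ => p + q * x + 0 * x ^ 2 := by
    funext x; ring
  have h : ((fun x : ℝ => p + q * x) * u)
      = fun x => (p + q * x + 0 * x ^ 2) * u x := by
    funext x; simp only [Pi.mul_apply]; ring_nf
  rw [h, leib p q 0 hu n]
  funext x; simp only [Pi.add_apply, Pi.mul_apply, Pi.smul_apply, smul_eq_mul]; ring

end S11Aux

set_option maxHeartbeats 4000000 in
open S11 in
/-- `Υ_{(1-k)/2,k/2}(X_F) = η̄²(F)η̄^{2k-1}` is an odd 1-cocycle of
`osp(1|2)` with values in `𝔇_{(1-k)/2,k/2}`, tested on homogeneous densities `H`. -/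
theorem upsilon_odd_cocycle (k : ℕ) (hk : 1 ≤ k) (pF pG : Bool) (F G : SFn)
    (hF : OspHom pF F) (hG : OspHom pG G)
    (qH : Bool) (H : SFn) (hHs : Smooth H) (hH : Homog qH H) :
    mul (etab (etab (cbr pF F G))) (etab^[2*k-1] H)
      = LD ((1 - (k:ℝ))/2) ((k:ℝ)/2) pF F (!pG)
          (fun K => mul (etab (etab G)) (etab^[2*k-1] K)) qH H
        - sgn pF pG • LD ((1 - (k:ℝ))/2) ((k:ℝ)/2) pG G (!pF)
          (fun K => mul (etab (etab F)) (etab^[2*k-1] K)) qH H := by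
  obtain ⟨m, rfl⟩ : ∃ m, k = m + 1 := ⟨k - 1, by omega⟩
  have h21 : 2 * (m + 1) - 1 = 2 * m + 1 := by omega
  rw [h21]
  obtain ⟨h0, h1⟩ := H
  obtain ⟨hs0, hs1⟩ := hHs
  replace hs0 : ContDiff ℝ (⊤ : ℕ∞) h0 := hs0
  replace hs1 : ContDiff ℝ (⊤ : ℕ∞) h1 := hs1
  have H0 : S11Aux.Sm h0 := hs0.of_le (by simp)
  have H1 : S11Aux.Sm h1 := hs1.of_le (by simp)
  cases qH <;> simp only [Homog, if_true, if_false, reduceIte, Bool.false_eq_true] at hH <;>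
    cases hH <;> cases pF <;> cases pG <;>
    simp only [OspHom, OspE, OspO, if_true, if_false, reduceIte, Bool.false_eq_true] at hF hG
  all_goals first
    | obtain ⟨aF, bF, cF, rfl⟩ := hF
    | obtain ⟨aF, bF, rfl⟩ := hF
  all_goals first
    | obtain ⟨aG, bG, cG, rfl⟩ := hG
    | obtain ⟨aG, bG, rfl⟩ := hG
  all_goals
    simp (disch := apply_rules [H0, H1, S11Aux.Sm.addP, S11Aux.Sm.mulP, S11Aux.Sm.smulP,
          S11Aux.Sm.negP, S11Aux.Sm.zeroP, S11Aux.Sm.lam_cmul, S11Aux.Sm.poly2,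
          S11Aux.Sm.poly1, S11Aux.Sm.iter, S11Aux.Sm.dv, S11Aux.Sm.constP,
          S11Aux.Sm.idP, S11Aux.Sm.powP])
        only [LD, Lden, cbr, mul, dx, etab, sgn, sgn1, S11Aux.etab_iter,
          S11Aux.deriv_zeroP, S11Aux.iter_zeroP, S11Aux.dD, S11Aux.dD2,
          S11Aux.deriv_negP, S11Aux.deriv_smulP, S11Aux.deriv_addP, S11Aux.deriv_mulP,
          S11Aux.iter_addP, S11Aux.iter_smulP, S11Aux.iter_negP,
          S11Aux.dpoly, S11Aux.dpoly1, S11Aux.dlin, S11Aux.constmulP, deriv_const',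
          S11Aux.leibP, S11Aux.leibP1, S11Aux.iter_cmul, deriv_const_mul_field',
          sub_eq_add_neg, neg_mul, mul_neg, neg_neg, neg_add_rev,
          Prod.fst_add, Prod.snd_add, Prod.fst_sub, Prod.smul_fst, Prod.smul_snd,
          Prod.snd_sub, Prod.mk_add_mk, Prod.smul_mk, Prod.mk.injEq,
          zero_mul, mul_zero, add_zero, zero_add, smul_zero, neg_zero, Pi.zero_apply,
          S11Aux.lamzero, Prod.fst_neg, Prod.snd_neg, one_smul, mul_one, smul_neg,
          Bool.false_and, Bool.and_false, Bool.and_self, Bool.not_false, Bool.not_true,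
          Bool.true_and, Bool.and_true, true_and, and_true,
          Bool.xor_false, Bool.xor_true, if_true, if_false, Bool.false_eq_true,
          Bool.true_eq_false, Nat.add_sub_cancel, Nat.succ_sub_succ_eq_sub,
          Nat.sub_zero, Prod.neg_mk, Prod.mk_add_mk]
  all_goals try exact ⟨trivial, trivial⟩
  all_goals
    (try refine ⟨trivial, ?_⟩) <;> (try refine ⟨?_, trivial⟩) <;>
    rcases m with _ | (_ | n) <;>
    · funext x
      simp only [Pi.add_apply, Pi.mul_apply, Pi.neg_apply, Pi.smul_apply, smul_eq_mul,
        Pi.zero_apply, deriv_const', mul_zero, zero_mul, add_zero, zero_add,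
        Nat.zero_sub, Nat.sub_zero, Nat.sub_self, Nat.add_sub_cancel,
        Nat.succ_sub_succ_eq_sub, Nat.zero_add]
      push_cast
      ring
end
end

section
/- The maps C_k(F d/dx)(f dx^{(1-k)/2}) = F'f^{(k)} dx^{(1+k)/2} and C̃_k(F d/dx)(f dx^{(1-k)/2}) = F''f^{(k-1)} dx^{(1+k)/2} are 1-cocycles on sl(2) with values in D_{(1-k)/2,(1+k)/2}, for every integer k ≥ 1: for F, G polynomials of degree ≤ 2 in x, C([F∂_x, G∂_x]) = L^{λ,μ}_{F∂_x}C(G∂_x) - L^{λ,μ}_{G∂_x}C(F∂_x). -/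
open scoped ContDiff

noncomputable section

namespace S11

open Polynomial in
lemma pev_contDiff (P : Polynomial ℝ) : ContDiff ℝ ∞ (pev P) := by
  unfold pev
  induction P using Polynomial.induction_on with
  | C a => simp only [eval_C]; exact contDiff_const
  | add p q hp hq => simp only [eval_add]; exact hp.add hq
  | monomial n a ih =>
      simp only [eval_mul, eval_C, eval_pow, eval_X]
      exact contDiff_const.mul (contDiff_id.pow (n+1))

lemma pev_deriv (P : Polynomial ℝ) : deriv (pev P) = pev P.derivative := by
  funext x; exact (Polynomial.hasDerivAt P x).deriv

lemma pev_hasDerivAt (P : Polynomial ℝ) (x : ℝ) :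
    HasDerivAt (pev P) (pev P.derivative x) x := Polynomial.hasDerivAt P x

lemma iter_hasDerivAt {f : ℝ → ℝ} (hf : ContDiff ℝ ∞ f) (m : ℕ) (x : ℝ) :
    HasDerivAt (iteratedDeriv m f) (iteratedDeriv (m+1) f x) x := by
  rw [iteratedDeriv_succ]
  exact ((hf.differentiable_iteratedDeriv m (by exact_mod_cast WithTop.coe_lt_top m)) x).hasDerivAt

lemma iter_add {u v : ℝ → ℝ} (hu : ContDiff ℝ ∞ u) (hv : ContDiff ℝ ∞ v) :
    ∀ k, iteratedDeriv k (fun y => u y + v y) = fun x => iteratedDeriv k u x + iteratedDeriv k v x := by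
  intro k
  induction k with
  | zero => simp
  | succ n ih =>
      rw [iteratedDeriv_succ, ih]
      funext x
      exact ((iter_hasDerivAt hu n x).add (iter_hasDerivAt hv n x)).deriv

lemma iter_cmul {u : ℝ → ℝ} (hu : ContDiff ℝ ∞ u) (c : ℝ) :
    ∀ k, iteratedDeriv k (fun y => c * u y) = fun x => c * iteratedDeriv k u x := by
  intro k
  induction k with
  | zero => simp
  | succ n ih =>
      rw [iteratedDeriv_succ, ih]
      funext x
      exact ((iter_hasDerivAt hu n x).const_mul c).deriv

lemma deriv3_zero {P : Polynomial ℝ} (hP : P.natDegree ≤ 2) :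
    P.derivative.derivative.derivative = 0 := by
  have h1 : P.derivative.natDegree ≤ 1 := le_trans (Polynomial.natDegree_derivative_le P) (by omega)
  have h2 : P.derivative.derivative.natDegree ≤ 0 :=
    le_trans (Polynomial.natDegree_derivative_le _) (by omega)
  have h3 := Polynomial.eq_C_of_natDegree_le_zero h2
  rw [h3, Polynomial.derivative_C]

lemma leib (P : Polynomial ℝ) (hP : P.derivative.derivative.derivative = 0)
    {g : ℝ → ℝ} (hg : ContDiff ℝ ∞ g) :
    ∀ k : ℕ, ∀ x : ℝ, iteratedDeriv k (fun y => pev P y * g y) x =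
      pev P x * iteratedDeriv k g x
        + (k : ℝ) * pev P.derivative x * iteratedDeriv (k-1) g x
        + ((k : ℝ) * ((k : ℝ) - 1) / 2) * pev P.derivative.derivative x * iteratedDeriv (k-2) g x := by
  intro k
  induction k with
  | zero => intro x; simp
  | succ n ih =>
      intro x
      rw [iteratedDeriv_succ]
      have hfun : iteratedDeriv n (fun y => pev P y * g y) = fun y =>
          pev P y * iteratedDeriv n g y
            + (n : ℝ) * pev P.derivative y * iteratedDeriv (n-1) g y
            + ((n : ℝ) * ((n : ℝ) - 1) / 2) * pev P.derivative.derivative y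
                * iteratedDeriv (n-2) g y := funext fun y => ih y
      rw [hfun]
      have H1 := (pev_hasDerivAt P x).mul (iter_hasDerivAt hg n x)
      have H2 := ((pev_hasDerivAt P.derivative x).const_mul ((n:ℝ))).mul
        (iter_hasDerivAt hg (n-1) x)
      have H3 := ((pev_hasDerivAt P.derivative.derivative x).const_mul
        ((n : ℝ) * ((n : ℝ) - 1) / 2)).mul (iter_hasDerivAt hg (n-2) x)
      have H := ((H1.add H2).add H3).deriv
      refine Eq.trans H ?_
      have h0 : pev P.derivative.derivative.derivative x = 0 := by
        rw [hP]; simp [pev]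
      rw [h0]
      rcases n with _ | _ | m
      · norm_num; ring
      · norm_num; ring
      · have e1 : m + 2 - 1 = m + 1 := rfl
        have e2 : m + 2 - 2 = m := rfl
        have e3 : m + 1 + 1 = m + 2 := rfl
        rw [e1, e2]
        push_cast
        ring

lemma iter_cL (P : Polynomial ℝ) (hP3 : P.derivative.derivative.derivative = 0) (l : ℝ)
    {f : ℝ → ℝ} (hf : ContDiff ℝ ∞ f) (k : ℕ) (x : ℝ) :
    iteratedDeriv k (cL l (pev P) f) x
      = pev P x * iteratedDeriv (k+1) f x
        + (k:ℝ) * pev P.derivative x * iteratedDeriv (k-1+1) f x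
        + ((k:ℝ)*((k:ℝ)-1)/2) * pev P.derivative.derivative x * iteratedDeriv (k-2+1) f x
        + l * (pev P.derivative x * iteratedDeriv k f x
              + (k:ℝ) * pev P.derivative.derivative x * iteratedDeriv (k-1) f x) := by
  have hdf : ContDiff ℝ ∞ (deriv f) := (contDiff_infty_iff_deriv.mp hf).2
  have hu : ContDiff ℝ ∞ (fun y => pev P y * deriv f y) := (pev_contDiff P).mul hdf
  have hv : ContDiff ℝ ∞ (fun y => pev P.derivative y * f y) := (pev_contDiff _).mul hf
  have hcL : cL l (pev P) f
      = fun y => (pev P y * deriv f y) + l * (pev P.derivative y * f y) := by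
    funext y
    simp [cL, pev_deriv, smul_eq_mul, mul_assoc]
  rw [hcL]
  simp only [iter_add hu (contDiff_const.mul hv) k, iter_cmul hv l k,
    leib P hP3 hdf k x, leib P.derivative (by rw [hP3]; simp) hf k x]
  have h0 : pev P.derivative.derivative.derivative x = 0 := by rw [hP3]; simp [pev]
  rw [h0]
  simp only [← iteratedDeriv_succ']
  ring

lemma cL_pmul (R S : Polynomial ℝ) (l : ℝ) {f : ℝ → ℝ} (hf : ContDiff ℝ ∞ f) (k : ℕ) (x : ℝ) :
    cL l (pev R) (pev S * iteratedDeriv k f) x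
      = pev R x * (pev S.derivative x * iteratedDeriv k f x + pev S x * iteratedDeriv (k+1) f x)
        + l * (pev R.derivative x * (pev S x * iteratedDeriv k f x)) := by
  have hg : deriv (pev S * iteratedDeriv k f) x
      = pev S.derivative x * iteratedDeriv k f x + pev S x * iteratedDeriv (k+1) f x :=
    ((pev_hasDerivAt S x).mul (iter_hasDerivAt hf k x)).deriv
  simp only [cL, Pi.add_apply, Pi.mul_apply, Pi.smul_apply, smul_eq_mul, pev_deriv, hg]

lemma hW_aux (P Q : Polynomial ℝ) :
    deriv (pev P * deriv (pev Q) - deriv (pev P) * pev Q)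
      = fun x => pev P x * pev Q.derivative.derivative x
          - pev P.derivative.derivative x * pev Q x := by
  have e1 : pev P * deriv (pev Q) - deriv (pev P) * pev Q
      = pev (P * Q.derivative - P.derivative * Q) := by
    rw [pev_deriv P, pev_deriv Q]; funext y; simp [pev]
  rw [e1, pev_deriv]
  funext y
  simp [pev, Polynomial.derivative_mul]
  ring

lemma hW2_aux (P Q : Polynomial ℝ) (hP3 : P.derivative.derivative.derivative = 0)
    (hQ3 : Q.derivative.derivative.derivative = 0) :
    deriv (deriv (pev P * deriv (pev Q) - deriv (pev P) * pev Q))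
      = fun x => pev P.derivative x * pev Q.derivative.derivative x
          - pev P.derivative.derivative x * pev Q.derivative x := by
  rw [hW_aux]
  have e1 : (fun x => pev P x * pev Q.derivative.derivative x
      - pev P.derivative.derivative x * pev Q x)
      = pev (P * Q.derivative.derivative - P.derivative.derivative * Q) := by
    funext y; simp [pev]
  rw [e1, pev_deriv]
  funext y
  simp [pev, Polynomial.derivative_mul, hP3, hQ3]

end S11

open S11 in
/-- `C_k` and `C̃_k` are 1-cocycles on `sl(2)` with values in
`D_{(1-k)/2,(1+k)/2}`. -/
theorem sl2_cocycles (k : ℕ) (hk : 1 ≤ k) (P Q : Polynomial ℝ)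
    (hP : P.natDegree ≤ 2) (hQ : Q.natDegree ≤ 2) (f : ℝ → ℝ) (hf : ContDiff ℝ (⊤ : ℕ∞) f) :
    (deriv (pev P * deriv (pev Q) - deriv (pev P) * pev Q) * iteratedDeriv k f
      = (cL ((1 + (k:ℝ))/2) (pev P) (deriv (pev Q) * iteratedDeriv k f)
          - deriv (pev Q) * iteratedDeriv k (cL ((1 - (k:ℝ))/2) (pev P) f))
        - (cL ((1 + (k:ℝ))/2) (pev Q) (deriv (pev P) * iteratedDeriv k f)
          - deriv (pev P) * iteratedDeriv k (cL ((1 - (k:ℝ))/2) (pev Q) f)))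
    ∧ (deriv (deriv (pev P * deriv (pev Q) - deriv (pev P) * pev Q)) * iteratedDeriv (k-1) f
      = (cL ((1 + (k:ℝ))/2) (pev P) (deriv (deriv (pev Q)) * iteratedDeriv (k-1) f)
          - deriv (deriv (pev Q)) * iteratedDeriv (k-1) (cL ((1 - (k:ℝ))/2) (pev P) f))
        - (cL ((1 + (k:ℝ))/2) (pev Q) (deriv (deriv (pev P)) * iteratedDeriv (k-1) f)
          - deriv (deriv (pev P)) * iteratedDeriv (k-1) (cL ((1 - (k:ℝ))/2) (pev Q) f))) := by
  have hf' : ContDiff ℝ ∞ f := hf.of_le (by simp)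
  have hP3 := deriv3_zero hP
  have hQ3 := deriv3_zero hQ
  constructor
  · funext x
    simp only [hW_aux P Q]
    simp only [Pi.mul_apply, Pi.sub_apply, pev_deriv]
    rw [cL_pmul P Q.derivative _ hf' k x, cL_pmul Q P.derivative _ hf' k x,
      iter_cL P hP3 _ hf' k x, iter_cL Q hQ3 _ hf' k x]
    rcases k with _ | _ | m
    · omega
    · norm_num; ring
    · have e1 : m + 2 - 1 = m + 1 := rfl
      have e2 : m + 2 - 2 = m := rfl
      rw [e1, e2]
      push_cast
      ring
  · funext x
    simp only [hW2_aux P Q hP3 hQ3]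
    simp only [Pi.mul_apply, Pi.sub_apply, pev_deriv]
    have hzP : pev P.derivative.derivative.derivative x = 0 := by rw [hP3]; simp [pev]
    have hzQ : pev Q.derivative.derivative.derivative x = 0 := by rw [hQ3]; simp [pev]
    rw [cL_pmul P Q.derivative.derivative _ hf' (k-1) x,
      cL_pmul Q P.derivative.derivative _ hf' (k-1) x,
      iter_cL P hP3 _ hf' (k-1) x, iter_cL Q hQ3 _ hf' (k-1) x]
    rw [hzP, hzQ]
    rcases k with _ | _ | _ | m
    · omega
    · norm_num; ring
    · norm_num; ring
    · have e1 : m + 3 - 1 = m + 2 := rfl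
      have e2 : m + 2 - 1 = m + 1 := rfl
      have e3 : m + 2 - 2 = m := rfl
      rw [e1, e2, e3]
      push_cast
      ring
end
end

section
/- The 1-cocycle C'_λ(F d/dx)(f dx^λ) = F'f dx^λ on sl(2) with values in D_{λ,λ} is not a coboundary: there is no differential operator A ∈ D_{λ,λ} with C'_λ(X) = L^{λ,λ}_X(A) for all X ∈ sl(2). -/
noncomputable section

lemma iterconst (c : ℝ) (i : ℕ) (hi : i ≠ 0) : iteratedDeriv i (fun _ : ℝ => c) = 0 := by
  obtain ⟨j, rfl⟩ := Nat.exists_eq_succ_of_ne_zero hi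
  induction j with
  | zero =>
    rw [iteratedDeriv_succ, iteratedDeriv_zero]
    ext x; simp
  | succ k ih =>
    rw [iteratedDeriv_succ, ih (Nat.succ_ne_zero k)]
    ext x; simp [Pi.zero_def]


open S11 in
/-- the 1-cocycle `C'_λ(F∂_x) = F'·` on `sl(2)` with values in `D_{λ,λ}`
is not a coboundary. -/
theorem Cprime_not_coboundary (l : ℝ) :
    ¬ ∃ (N : ℕ) (a : ℕ → ℝ → ℝ), (∀ i, ContDiff ℝ (⊤ : ℕ∞) (a i)) ∧
      ∀ P : Polynomial ℝ, P.natDegree ≤ 2 → ∀ f : ℝ → ℝ, ContDiff ℝ (⊤ : ℕ∞) f →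
        deriv (pev P) * f
          = cL l (pev P) (∑ i ∈ Finset.range (N + 1), a i * iteratedDeriv i f)
            - ∑ i ∈ Finset.range (N + 1), a i * iteratedDeriv i (cL l (pev P) f) := by
  rintro ⟨N, a, -, h⟩
  have hpev : pev (Polynomial.X : Polynomial ℝ) = fun x => x := by
    funext x; simp [pev]
  have hder : deriv (pev (Polynomial.X : Polynomial ℝ)) = fun _ : ℝ => (1:ℝ) := by
    rw [hpev]; funext x; exact deriv_id x
  have hcl : cL l (pev (Polynomial.X : Polynomial ℝ)) (fun _ : ℝ => (1:ℝ)) = fun _ => l := by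
    funext x
    simp [cL, hpev, hder]
  have key := h Polynomial.X (by simp) (fun _ => 1) contDiff_const
  have e := congrFun key 0
  have hsum1 : (∑ i ∈ Finset.range (N + 1), a i * iteratedDeriv i (fun _ : ℝ => (1:ℝ))) 0
      = a 0 0 := by
    rw [Finset.sum_apply]
    rw [Finset.sum_eq_single_of_mem 0 (Finset.mem_range.2 (Nat.succ_pos N))]
    · simp
    · intro i _ hi
      rw [Pi.mul_apply, iterconst 1 i hi]
      simp
  have hsum2 : (∑ i ∈ Finset.range (N + 1),
      a i * iteratedDeriv i (cL l (pev (Polynomial.X : Polynomial ℝ)) (fun _ : ℝ => (1:ℝ)))) 0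
      = a 0 0 * l := by
    rw [hcl, Finset.sum_apply]
    rw [Finset.sum_eq_single_of_mem 0 (Finset.mem_range.2 (Nat.succ_pos N))]
    · simp
    · intro i _ hi
      rw [Pi.mul_apply, iterconst l i hi]
      simp
  rw [Pi.mul_apply, Pi.sub_apply, hsum2] at e
  have hclg : cL l (pev (Polynomial.X : Polynomial ℝ))
      (∑ i ∈ Finset.range (N + 1), a i * iteratedDeriv i (fun _ : ℝ => (1:ℝ))) 0
      = l * a 0 0 := by
    simp only [cL, Pi.add_apply, Pi.mul_apply, Pi.smul_apply, hder, hsum1]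
    rw [hpev]
    simp
  rw [hclg, hder] at e
  simp at e
  linarith
end
end

section
/- For k ≥ 1 and (λ,μ) = ((1-k)/2, k/2), the odd 1-cocycle Υ̃ = Υ̃_{(1-k)/2,k/2}(X_F) = (k-1)η⁴(F)η̄^{2k-3} + η³(F)η̄^{2k-2} and the odd 1-cocycle Υ = Υ_{(1-k)/2,k/2}(X_F) = η̄²(F)η̄^{2k-1} have linearly independent cohomology classes: no nontrivial linear combination α₁Υ + α₂Υ̃ is a coboundary δ(A) for A ∈ (𝔇_{(1-k)/2,k/2})₁. -/
noncomputable section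

namespace S11

/-- `Υ_{(1-k)/2,k/2}(X_F)` applied to a density. -/
def Ups (k : ℕ) (F H : SFn) : SFn := mul (etab (etab F)) (etab^[2*k-1] H)

/-- `Υ̃_{(1-k)/2,k/2}(X_F)` applied to a density. -/
def Upst (k : ℕ) (F H : SFn) : SFn :=
  ((k:ℝ) - 1) • mul (eta^[4] F) (etab^[2*k-3] H) + mul (eta^[3] F) (etab^[2*k-2] H)

end S11


section Aux
open S11

private lemma prod_fact (n : ℕ) : (∏ i ∈ Finset.range n, ((n:ℝ) - i)) = n.factorial := by
  rw [← Finset.prod_range_reflect]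
  rw [show (n.factorial : ℝ) = ∏ i ∈ Finset.range n, ((i:ℝ)+1) by
    push_cast [← Finset.prod_range_add_one_eq_factorial]; ring]
  apply Finset.prod_congr rfl
  intro i hi
  simp only [Finset.mem_range] at hi
  rw [Nat.cast_sub (by omega), Nat.cast_sub (by omega)]
  push_cast; ring

private lemma deriv_zero_fun : deriv (0 : ℝ → ℝ) = 0 := by
  funext x; exact deriv_const x 0

private lemma iter_deriv_zero (i : ℕ) : deriv^[i] (0 : ℝ → ℝ) = 0 :=
  Function.iterate_fixed deriv_zero_fun i

private lemma dx_iter (i : ℕ) (G : SFn) : dx^[i] G = (deriv^[i] G.1, deriv^[i] G.2) := by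
  induction i generalizing G with
  | zero => rfl
  | succ n ih =>
      rw [Function.iterate_succ_apply, ih, Function.iterate_succ_apply,
        Function.iterate_succ_apply]
      rfl

private lemma etab_iter_even (g : ℝ → ℝ) (j : ℕ) :
    etab^[2*j] ((g, 0) : SFn) = ((fun x => (-1:ℝ)^j * deriv^[j] g x), 0) := by
  induction j with
  | zero => simp
  | succ n ih =>
      rw [show 2*(n+1) = 2*n+1+1 by ring, Function.iterate_succ_apply',
        Function.iterate_succ_apply', ih]
      show etab (etab _) = _
      unfold etab
      simp only [deriv_const_mul_field']
      rw [deriv_zero_fun]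
      refine Prod.ext ?_ (by simp)
      funext x
      simp [Function.iterate_succ_apply', pow_succ]

private lemma iter_deriv_cmul (c : ℝ) (f : ℝ → ℝ) (j : ℕ) :
    deriv^[j] (fun x => c * f x) = fun x => c * deriv^[j] f x := by
  induction j with
  | zero => rfl
  | succ n ih =>
      rw [Function.iterate_succ_apply', ih, Function.iterate_succ_apply']
      exact deriv_const_mul_field' c

private lemma hderm (m : ℕ) : deriv^[m] (fun x : ℝ => x^m) 0 = m.factorial := by
  rw [iter_deriv_pow, Nat.sub_self, pow_zero, mul_one, prod_fact]

end Aux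

open S11 in
/-- the cohomology classes of `Υ` and `Υ̃` are linearly independent: no
nontrivial linear combination `α₁Υ + α₂Υ̃` is a coboundary of an odd differential operator. -/
theorem upsilon_classes_independent (k : ℕ) (hk : 1 ≤ k) (a1 a2 : ℝ)
    (h : ∃ A : SFn → SFn, IsDOp true A ∧
      ∀ p F, OspHom p F → ∀ q H, Smooth H → Homog q H →
        a1 • Ups k F H + a2 • Upst k F H
          = LD ((1 - (k:ℝ))/2) ((k:ℝ)/2) p F true A q H) :
    a1 = 0 ∧ a2 = 0 := by
  classical
  obtain ⟨K, rfl⟩ : ∃ K, k = K + 1 := ⟨k - 1, by omega⟩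
  obtain ⟨A, ⟨N, a, b, hab, hA⟩, hall⟩ := h
  have hA2 : ∀ (G : SFn) (x : ℝ),
      (A G).2 x = ∑ i ∈ Finset.range (N+1), a i x * deriv^[i] G.1 x := by
    intro G x
    rw [hA, Prod.snd_sum, Finset.sum_apply]
    exact Finset.sum_congr rfl fun i _ => by
      simp [mul, dx_iter, dth, iter_deriv_zero]
  have hxp : ∀ (x : ℝ) (n : ℕ), x * x ^ n = x ^ (n + 1) := by
    intro x n; rw [pow_succ]; ring
  constructor
  · -- a1 = 0
    set g : ℝ → ℝ := fun x => x ^ (K+1) with hgdef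
    set H : SFn := (g, 0) with hHdef
    have hx : OspHom false xF := by
      simp only [OspHom, Bool.false_eq_true, if_false]
      exact ⟨0, 1, 0, by unfold xF; exact Prod.ext (funext fun x => by ring) rfl⟩
    have h1 := hall false xF hx false H ⟨contDiff_id.pow (K+1), contDiff_const⟩ rfl
    have h1' := congrArg (fun P : SFn => P.2 0) h1
    simp only [Prod.snd_add, Prod.smul_snd, Pi.add_apply, Pi.smul_apply, smul_eq_mul] at h1'
    have hU : (Ups (K+1) xF H).2 0 = (-1:ℝ)^K * (K+1).factorial := by
      unfold Ups
      rw [hHdef, show 2*(K+1)-1 = 2*K+1 from by omega, Function.iterate_succ_apply',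
        etab_iter_even]
      unfold etab xF mul
      simp only [deriv_const_mul_field', deriv_id'', deriv_zero_fun,
        Pi.add_apply, Pi.mul_apply, Pi.neg_apply, Pi.zero_apply, Pi.one_apply]
      rw [← Function.iterate_succ_apply' deriv K]
      simp only [Nat.succ_eq_add_one]
      rw [hgdef, hderm (K+1)]
      ring
    have he2 : eta (eta xF) = ((fun _ : ℝ => (1:ℝ)), (0 : ℝ → ℝ)) := by
      unfold eta xF
      exact Prod.ext (by simp [deriv_id'']) (by simp [deriv_zero_fun])
    have he3 : eta^[3] xF = ((0 : ℝ → ℝ), (0 : ℝ → ℝ)) := by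
      show eta (eta (eta xF)) = _
      rw [he2]
      unfold eta
      exact Prod.ext rfl (by simp [deriv_const']; rfl)
    have he4 : eta^[4] xF = ((0 : ℝ → ℝ), (0 : ℝ → ℝ)) := by
      show eta (eta^[3] xF) = _
      rw [he3]
      unfold eta
      exact Prod.ext rfl (by simp [deriv_zero_fun])
    have hUt : (Upst (K+1) xF H).2 0 = 0 := by
      unfold Upst
      rw [he3, he4]
      simp [mul]
    have hu : (Lden ((1 - ((K:ℝ)+1))/2) false xF false H).1
        = fun x => (((K:ℝ)+1) + (1 - ((K:ℝ)+1))/2) * x ^ (K+1) := by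
      unfold Lden mul dx etab xF
      rw [hHdef]
      funext x
      simp only [Prod.fst_add, Prod.snd_add, Prod.smul_fst, Pi.add_apply, Pi.mul_apply,
        Pi.smul_apply, smul_eq_mul, Pi.zero_apply, Pi.neg_apply]
      rw [hgdef]
      simp [deriv_pow, deriv_zero_fun, deriv_id'']
      linear_combination ((K:ℝ)+1) * (hxp x K)
    have hRHS : (LD ((1 - ((K:ℝ)+1))/2) (((K:ℝ)+1)/2) false xF true A false H).2 0 = 0 := by
      have h5 : (A (Lden ((1 - ((K:ℝ)+1))/2) false xF false H)).2 0
          = (((K:ℝ)+1) + (1 - ((K:ℝ)+1))/2) * ∑ i ∈ Finset.range (N+1), a i 0 * deriv^[i] g 0 := by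
        rw [hA2, Finset.mul_sum]
        refine Finset.sum_congr rfl fun i _ => ?_
        rw [hu, iter_deriv_cmul]
        ring
      have h6 : (Lden (((K:ℝ)+1)/2) false xF true (A H)).2 0
          = (((K:ℝ)+1)/2 + 1/2) * (A H).2 0 := by
        unfold Lden mul dx etab xF
        simp only [Prod.snd_add, Prod.smul_snd, Pi.add_apply, Pi.mul_apply,
          Pi.smul_apply, smul_eq_mul, Pi.zero_apply, Pi.neg_apply,
          deriv_id'', deriv_zero_fun, Pi.one_apply]
        norm_num
        ring
      have hld : (LD ((1 - ((K:ℝ)+1))/2) (((K:ℝ)+1)/2) false xF true A false H).2 0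
          = (Lden (((K:ℝ)+1)/2) false xF true (A H)).2 0
            - (sgn true false • A (Lden ((1 - ((K:ℝ)+1))/2) false xF false H)).2 0 := by
        have : ((K:ℝ)+1) = ((K+1 : ℕ) : ℝ) := by push_cast; ring
        unfold LD
        rfl
      rw [hld, Prod.smul_snd]
      simp only [Pi.smul_apply, smul_eq_mul]
      rw [h5, h6, hA2]
      have hsgn : sgn true false = (1:ℝ) := by simp [sgn]
      rw [hsgn, hHdef]
      ring
    have hcast : ((1 - ((K+1:ℕ):ℝ))/2) = ((1 - ((K:ℝ)+1))/2) ∧ (((K+1:ℕ):ℝ)/2) = (((K:ℝ)+1)/2) := by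
      constructor <;> push_cast <;> ring
    rw [hU, hUt, hcast.1, hcast.2, hRHS] at h1'
    rw [mul_zero, add_zero] at h1'
    have hne : ((-1:ℝ)^K * (K+1).factorial) ≠ 0 :=
      mul_ne_zero (pow_ne_zero _ (by norm_num)) (Nat.cast_ne_zero.2 (K+1).factorial_ne_zero)
    exact (mul_eq_zero.mp h1').resolve_right hne
  · -- a2 = 0
    set g2 : ℝ → ℝ := fun x => x ^ K with hg2def
    set H2 : SFn := (g2, 0) with hH2def
    have hx2 : OspHom false x2F := by
      simp only [OspHom, Bool.false_eq_true, if_false]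
      exact ⟨0, 0, 1, by unfold x2F; exact Prod.ext (funext fun x => by ring) rfl⟩
    have h2 := hall false x2F hx2 false H2 ⟨contDiff_id.pow K, contDiff_const⟩ rfl
    have h2' := congrArg (fun P : SFn => P.2 0) h2
    simp only [Prod.snd_add, Prod.smul_snd, Pi.add_apply, Pi.smul_apply, smul_eq_mul] at h2'
    push_cast at h2'
    have hee : etab (etab x2F) = ((fun x : ℝ => -((2:ℝ)*x)), (0 : ℝ → ℝ)) := by
      unfold etab x2F
      dsimp only
      refine Prod.ext ?_ (by simp [deriv_zero_fun])
      funext x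
      show -deriv (fun x : ℝ => x ^ 2) x = -((2:ℝ) * x)
      rw [deriv_pow_field]; norm_num
    have hU2 : (Ups (K+1) x2F H2).2 0 = 0 := by
      unfold Ups
      rw [hee]
      simp [mul]
    have hfe2 : eta (eta x2F) = ((fun x : ℝ => (2:ℝ)*x), (0 : ℝ → ℝ)) := by
      unfold eta x2F
      dsimp only
      refine Prod.ext ?_ (by simp [deriv_zero_fun])
      funext x
      show deriv (fun x : ℝ => x ^ 2) x = (2:ℝ) * x
      rw [deriv_pow_field]; norm_num
    have hfe3 : eta^[3] x2F = ((0 : ℝ → ℝ), (fun _ : ℝ => (2:ℝ))) := by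
      show eta (eta (eta x2F)) = _
      rw [hfe2]
      unfold eta
      refine Prod.ext rfl ?_
      funext x; rw [deriv_const_mul_field', deriv_id'']; norm_num
    have hfe4 : eta^[4] x2F = ((fun _ : ℝ => (2:ℝ)), (0 : ℝ → ℝ)) := by
      show eta (eta^[3] x2F) = _
      rw [hfe3]
      unfold eta
      exact Prod.ext rfl (by simp [deriv_zero_fun])
    have hUt2 : (Upst (K+1) x2F H2).2 0 = 2 * (-1:ℝ)^K * (K+1).factorial := by
      unfold Upst
      rw [hfe3, hfe4, hH2def, show 2*(K+1)-2 = 2*K from by omega, etab_iter_even]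
      cases K with
      | zero =>
          norm_num [mul, hg2def]
      | succ K' =>
          rw [show 2*(K'+1+1)-3 = 2*K'+1 from by omega, Function.iterate_succ_apply',
            etab_iter_even]
          unfold etab mul
          simp only [deriv_const_mul_field', Prod.snd_add, Prod.smul_snd, Pi.add_apply,
            Pi.mul_apply, Pi.smul_apply, smul_eq_mul, Pi.zero_apply, Pi.neg_apply]
          rw [← Function.iterate_succ_apply' deriv K']
          simp only [Nat.succ_eq_add_one]
          rw [hg2def, hderm (K'+1)]
          have hfac : ((K'+1+1).factorial : ℝ) = ((K':ℝ)+1+1) * (K'+1).factorial := by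
            rw [Nat.factorial_succ]; push_cast; ring
          rw [hfac]
          push_cast
          rw [pow_succ]
          ring
    have hu2 : (Lden ((1 - ((K:ℝ)+1))/2) false x2F false H2).1 = (0 : ℝ → ℝ) := by
      unfold Lden mul dx etab x2F
      rw [hH2def]
      funext x
      rw [hg2def]
      simp [deriv_pow, deriv_zero_fun]
      cases K with
      | zero => norm_num
      | succ K' =>
          have e1 : x * x^(K'+1) = x^(K'+2) := hxp x (K'+1)
          have e2 : x^2 * x^K' = x^(K'+2) := by rw [pow_add]; ring
          push_cast
          linear_combination ((K':ℝ)+1) * e2 - ((K':ℝ)+1) * e1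
    have h7 : (A (Lden ((1 - ((K:ℝ)+1))/2) false x2F false H2)).2 0 = 0 := by
      rw [hA2]
      refine Finset.sum_eq_zero fun i _ => ?_
      rw [hu2, iter_deriv_zero]
      simp
    have h8 : (Lden (((K:ℝ)+1)/2) false x2F true (A H2)).2 0 = 0 := by
      unfold Lden mul dx etab x2F
      simp [deriv_pow, deriv_zero_fun]
    have hRHS2 : (LD ((1 - ((K:ℝ)+1))/2) (((K:ℝ)+1)/2) false x2F true A false H2).2 0 = 0 := by
      have hld : (LD ((1 - ((K:ℝ)+1))/2) (((K:ℝ)+1)/2) false x2F true A false H2).2 0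
          = (Lden (((K:ℝ)+1)/2) false x2F true (A H2)).2 0
            - (sgn true false • A (Lden ((1 - ((K:ℝ)+1))/2) false x2F false H2)).2 0 := by
        unfold LD
        rfl
      rw [hld, Prod.smul_snd]
      simp only [Pi.smul_apply, smul_eq_mul]
      rw [h7, h8]
      simp
    rw [hU2, hUt2, hRHS2] at h2'
    rw [mul_zero, zero_add] at h2'
    have hne : (2 * (-1:ℝ)^K * (K+1).factorial) ≠ 0 :=
      mul_ne_zero (mul_ne_zero two_ne_zero (pow_ne_zero _ (by norm_num)))
        (Nat.cast_ne_zero.2 (K+1).factorial_ne_zero)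
    exact (mul_eq_zero.mp h2').resolve_right hne
end
end

section
/- Let Υ₀ = (Υ₀₀, Υ₁₁) be an even 1-cocycle of osp(1|2) with values in 𝔇_{λ,μ} such that its even-part restriction Υ₀₀ to sl(2) is, up to coboundary, a linear combination of the standard sl(2)-cocycles (so Υ₀₀(∂_x) = 0 up to coboundary). Then the odd-part component Υ₁₁: 𝔥 → (𝔇_{λ,μ})₁ satisfies 𝔏^{λ,μ}_{∂_x}(Υ₁₁) = 0, i.e., Υ₁₁(X_{hθ}) has constant coefficients: Υ₁₁([∂_x, X_{hθ}]) = 𝔏^{λ,μ}_{∂_x}(Υ₁₁(X_{hθ})) for all h of degree ≤ 1. -/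
noncomputable section

namespace S11

/-- The 1-cocycle equation for an even homogeneous cochain `U` (the value `U pF F` is an
operator of parity `pF`) at the homogeneous pair `(X_F, X_G)`. -/
def cocEqH (l m : ℝ) (U : Bool → SFn → SFn → SFn) (pF : Bool) (F : SFn)
    (pG : Bool) (G : SFn) : Prop :=
  ∀ q H, Smooth H → Homog q H →
    U (xor pF pG) (cbr pF F G) H
      = LD l m pF F pG (U pG G) q H - sgn pF pG • LD l m pG G pF (U pF F) q H

end S11

open S11 in
lemma S11.Lden_zero (l : ℝ) (p : Bool) (F : SFn) (q : Bool) :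
    Lden l p F q (0 : SFn) = 0 := by
  have hd0 : deriv (0 : ℝ → ℝ) = 0 := by
    funext x
    rw [show (0 : ℝ → ℝ) = fun _ => (0:ℝ) from rfl]
    simp
  have hdx : dx (0 : SFn) = 0 := Prod.ext hd0 hd0
  have hetab : etab (0 : SFn) = 0 :=
    Prod.ext rfl (by show -deriv (0 : ℝ → ℝ) = 0; rw [hd0]; simp)
  have hmul : ∀ G : SFn, mul G (0 : SFn) = 0 := by
    intro G; simp only [mul, Prod.ext_iff]
    constructor <;> (funext x; simp)
  have hmul2 : ∀ G : SFn, mul (dx (0:SFn)) G = 0 := by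
    intro G; rw [hdx]; simp only [mul, Prod.ext_iff]
    constructor <;> (funext x; simp)
  simp [Lden, hdx, hetab, hmul, hmul2]

open S11 in
/-- if `Υ₀ = (Υ₀₀, Υ₁₁)` is an even 1-cocycle with `Υ₀₀(∂_x) = 0`, then
`Υ₁₁([∂_x, X_{hθ}]) = 𝔏^{λ,μ}_{∂_x}(Υ₁₁(X_{hθ}))`, i.e. `𝔏^{λ,μ}_{∂_x}(Υ₁₁) = 0`. -/
theorem even_cocycle_constant_coefficients (l m : ℝ) (U : Bool → SFn → SFn → SFn)
    (hcoc : ∀ pF F pG G, OspHom pF F → OspHom pG G → cocEqH l m U pF F pG G)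
    (h1 : U false oneF = fun _ => 0) :
    ∀ h : ℝ → ℝ, Affine h → ∀ q H, Smooth H → Homog q H →
      U true (cbr false oneF ((0, h) : SFn)) H
        = LD l m false oneF true (U true ((0, h) : SFn)) q H := by
  intro h hA q H hS hH
  obtain ⟨a, b, rfl⟩ := hA
  have hF : OspHom false oneF := by
    refine ⟨1, 0, 0, ?_⟩
    refine Prod.ext ?_ rfl
    funext x; simp [oneF]
  have hG : OspHom true ((0, fun x => a + b * x) : SFn) := ⟨a, b, rfl⟩
  have key := hcoc false oneF true _ hF hG q H hS hH
  simp only [Bool.false_xor] at key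
  rw [key, h1]
  have hz : LD l m true ((0, fun x => a + b * x) : SFn) false (fun _ => (0:SFn)) q H = 0 := by
    simp [LD, Lden_zero, sgn]
  rw [hz]
  simp [sgn]
end
end
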